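/- Fix r > 0 and ζ ∈ [0, 2π). Let w₁ := (1/√(1+r²))·(1, 0, r·cos ζ, r·sin ζ) and w₂ := (1/√(1+r²))·(0, 1, −r·sin ζ, r·cos ζ) in ℝ⁴, and let W := Span{w₁, w₂}. Then for every δ > 0 and every (x₁, x₂, y₁, y₂) ∈ ℝ⁴: the point (x₁, x₂, y₁, y₂) lies in the closed δ-neighborhood N_δ(W) of W if and only if (x₁, x₂) lies in the closed ball in ℝ² of radius δ·√(1+r²)/r centered at (1/r)·R_ζ(y₁, y₂), where R_ζ(y₁, y₂) := (y₁·cos ζ + y₂·sin ζ, −y₁·sin ζ + y₂·cos ζ). -/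

import Mathlib

/-!
For a point `w = a • w₁ + b • w₂` of `W` and `p = (x, y)`, a direct computation (using
`cos² ζ + sin² ζ = 1`) gives the Pythagorean splitting
`‖p - w‖² = (r / √(1+r²))² ‖x - r⁻¹ R_ζ y‖² + ‖(a, b) - (x + r R_ζ y) / √(1+r²)‖²`.
Hence the distance from `p` to `W` is `r / √(1+r²) · ‖x - r⁻¹ R_ζ y‖`, attained at
`(a, b) = (x + r R_ζ y) / √(1+r²)`, and the statement is a rearrangement of `dist p W ≤ δ`.
-/

open Metric Real

noncomputable section

/-- The point of `ℝ⁴` with coordinates `(a, b, c, d)`. -/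
def pt4 (a b c d : ℝ) : EuclideanSpace ℝ (Fin 4) :=
  WithLp.toLp 2 (fun i : Fin 4 => if i = 0 then a else if i = 1 then b else if i = 2 then c else d)

/-- The point of `ℝ²` with coordinates `(a, b)`. -/
def pt2 (a b : ℝ) : EuclideanSpace ℝ (Fin 2) :=
  WithLp.toLp 2 (fun i : Fin 2 => if i = 0 then a else b)

/-- The vector `w₁ = (1/√(1+r²))·(1, 0, r cos ζ, r sin ζ)`. -/
def wvec₁ (r ζ : ℝ) : EuclideanSpace ℝ (Fin 4) :=
  (Real.sqrt (1 + r ^ 2))⁻¹ • pt4 1 0 (r * Real.cos ζ) (r * Real.sin ζ)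

/-- The vector `w₂ = (1/√(1+r²))·(0, 1, -r sin ζ, r cos ζ)`. -/
def wvec₂ (r ζ : ℝ) : EuclideanSpace ℝ (Fin 4) :=
  (Real.sqrt (1 + r ^ 2))⁻¹ • pt4 0 1 (-(r * Real.sin ζ)) (r * Real.cos ζ)

/-- The rotation `R_ζ(y₁, y₂) = (y₁ cos ζ + y₂ sin ζ, -y₁ sin ζ + y₂ cos ζ)` of `ℝ²`. -/
def rotPt (ζ y₁ y₂ : ℝ) : EuclideanSpace ℝ (Fin 2) :=
  pt2 (y₁ * Real.cos ζ + y₂ * Real.sin ζ) (-(y₁ * Real.sin ζ) + y₂ * Real.cos ζ)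

theorem Metric.mem_cthickening_iff_infDist_le {X : Type*} [PseudoMetricSpace X] {δ : ℝ}
    {E : Set X} {x : X} (hE : E.Nonempty) (hδ : 0 ≤ δ) :
    x ∈ cthickening δ E ↔ infDist x E ≤ δ := by
  rw [mem_cthickening_iff, infDist, ← ENNReal.le_ofReal_iff_toReal_le (infEDist_ne_top hE) hδ]

theorem Metric.infDist_eq_dist_of_forall_dist_le {X : Type*} [PseudoMetricSpace X]
    {s : Set X} {x y : X} (hy : y ∈ s) (h : ∀ z ∈ s, dist x y ≤ dist x z) :
    infDist x s = dist x y :=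
  (infDist_le_dist_of_mem hy).antisymm ((le_infDist ⟨y, hy⟩).2 h)

theorem dist_pt4_sq (a b c d : ℝ) (v : EuclideanSpace ℝ (Fin 4)) :
    dist (pt4 a b c d) v ^ 2 = (a - v 0) ^ 2 + (b - v 1) ^ 2 + (c - v 2) ^ 2 + (d - v 3) ^ 2 := by
  rw [EuclideanSpace.dist_eq, Real.sq_sqrt (by positivity), Fin.sum_univ_four]
  simp [pt4, Real.dist_eq]

theorem dist_pt2_sq (a b : ℝ) (v : EuclideanSpace ℝ (Fin 2)) :
    dist (pt2 a b) v ^ 2 = (a - v 0) ^ 2 + (b - v 1) ^ 2 := by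
  rw [EuclideanSpace.dist_eq, Real.sq_sqrt (by positivity), Fin.sum_univ_two]
  simp [pt2, Real.dist_eq]

theorem dist_sq_span_wvec {r : ℝ} (hr : r ≠ 0) (ζ x₁ x₂ y₁ y₂ a b : ℝ) :
    dist (pt4 x₁ x₂ y₁ y₂) (a • wvec₁ r ζ + b • wvec₂ r ζ) ^ 2 =
      (r / √(1 + r ^ 2) * dist (pt2 x₁ x₂) (r⁻¹ • rotPt ζ y₁ y₂)) ^ 2 +
        dist (pt2 a b) ((√(1 + r ^ 2))⁻¹ • (pt2 x₁ x₂ + r • rotPt ζ y₁ y₂)) ^ 2 := by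
  have hq : √(1 + r ^ 2) ^ 2 = 1 + r ^ 2 := Real.sq_sqrt (by positivity)
  have hq0 : √(1 + r ^ 2) ≠ 0 := by positivity
  rw [mul_pow, dist_pt4_sq, dist_pt2_sq, dist_pt2_sq]
  simp only [Fin.isValue, wvec₁, wvec₂, rotPt, pt4, pt2, PiLp.add_apply, PiLp.smul_apply,
    ↓reduceIte, smul_eq_mul, mul_one, mul_zero, add_zero, one_ne_zero, zero_add, Fin.reduceEq,
    mul_neg, smul_add]
  field_simp
  linear_combination (x₁ ^ 2 + x₂ ^ 2 + y₁ ^ 2 + y₂ ^ 2 - a ^ 2 - b ^ 2) * hq +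
    (r ^ 2 * (a ^ 2 + b ^ 2) - (1 + r ^ 2) * (y₁ ^ 2 + y₂ ^ 2)) * Real.sin_sq_add_cos_sq ζ

theorem infDist_pt4_span_wvec {r : ℝ} (hr : 0 < r) (ζ x₁ x₂ y₁ y₂ : ℝ) :
    infDist (pt4 x₁ x₂ y₁ y₂) (Submodule.span ℝ {wvec₁ r ζ, wvec₂ r ζ} : Set _) =
      r / √(1 + r ^ 2) * dist (pt2 x₁ x₂) (r⁻¹ • rotPt ζ y₁ y₂) := by
  set v := (√(1 + r ^ 2))⁻¹ • (pt2 x₁ x₂ + r • rotPt ζ y₁ y₂)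
  have hd : 0 ≤ r / √(1 + r ^ 2) * dist (pt2 x₁ x₂) (r⁻¹ • rotPt ζ y₁ y₂) := by positivity
  have hv : v = pt2 (v 0) (v 1) := by
    ext i; fin_cases i <;> rfl
  have hmin : dist (pt4 x₁ x₂ y₁ y₂) (v 0 • wvec₁ r ζ + v 1 • wvec₂ r ζ) =
      r / √(1 + r ^ 2) * dist (pt2 x₁ x₂) (r⁻¹ • rotPt ζ y₁ y₂) := by
    rw [← pow_left_inj₀ dist_nonneg hd two_ne_zero, dist_sq_span_wvec hr.ne', ← hv, dist_self]
    ring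
  rw [← hmin]
  refine infDist_eq_dist_of_forall_dist_le (Submodule.mem_span_pair.2 ⟨_, _, rfl⟩) ?_
  rintro _ hw
  obtain ⟨a, b, rfl⟩ := Submodule.mem_span_pair.1 hw
  rw [hmin, ← pow_le_pow_iff_left₀ hd dist_nonneg two_ne_zero, dist_sq_span_wvec hr.ne']
  exact le_add_of_nonneg_right (sq_nonneg _)

theorem statement15_general (r ζ : ℝ) (hr : 0 < r) :
    ∀ δ : ℝ, 0 < δ →
    ∀ x₁ x₂ y₁ y₂ : ℝ,
      pt4 x₁ x₂ y₁ y₂ ∈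
          cthickening δ ((Submodule.span ℝ {wvec₁ r ζ, wvec₂ r ζ} :
            Submodule ℝ (EuclideanSpace ℝ (Fin 4))) : Set (EuclideanSpace ℝ (Fin 4))) ↔
        pt2 x₁ x₂ ∈ closedBall (r⁻¹ • rotPt ζ y₁ y₂) (δ * Real.sqrt (1 + r ^ 2) / r) := by
  intro δ hδ x₁ x₂ y₁ y₂
  rw [mem_cthickening_iff_infDist_le ⟨0, Submodule.zero_mem _⟩ hδ.le,
    infDist_pt4_span_wvec hr, mem_closedBall, div_mul_eq_mul_div, div_le_iff₀ (by positivity),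
    le_div_iff₀ hr, mul_comm (dist _ _) r]

/-- Lemma A.2 of the paper: description of the `δ`-neighbourhood of the
plane `W = Span{w₁, w₂}` in terms of two-dimensional slices. -/
theorem statement15 (r ζ : ℝ) (hr : 0 < r) (hζ₀ : 0 ≤ ζ) (hζ₁ : ζ < 2 * π) :
    ∀ δ : ℝ, 0 < δ →
    ∀ x₁ x₂ y₁ y₂ : ℝ,
      pt4 x₁ x₂ y₁ y₂ ∈
          cthickening δ ((Submodule.span ℝ {wvec₁ r ζ, wvec₂ r ζ} :
            Submodule ℝ (EuclideanSpace ℝ (Fin 4))) : Set (EuclideanSpace ℝ (Fin 4))) ↔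
        pt2 x₁ x₂ ∈ closedBall (r⁻¹ • rotPt ζ y₁ y₂) (δ * Real.sqrt (1 + r ^ 2) / r) :=
  statement15_general r ζ hr
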